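/- The commutator width of Z ≀ Z is 1, i.e., every element of the commutator subgroup of Z ≀ Z is a commutator. -/

import Mathlib

lemma emd_one (x : ℤ →₀ ℤ) : Finsupp.equivMapDomain (1 : Equiv.Perm ℤ) x = x := by
  ext i; simp [Finsupp.equivMapDomain_apply]; rfl

lemma emd_mul (e f : Equiv.Perm ℤ) (x : ℤ →₀ ℤ) :
    Finsupp.equivMapDomain (e * f) x = Finsupp.equivMapDomain e (Finsupp.equivMapDomain f x) := by
  ext i; simp [Finsupp.equivMapDomain_apply]; rfl

/-- The shift automorphism of the base group of `ℤ ≀ ℤ`. -/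
noncomputable def shiftAut (k : ℤ) : Multiplicative (ℤ →₀ ℤ) ≃* Multiplicative (ℤ →₀ ℤ) :=
  AddEquiv.toMultiplicative (Finsupp.domCongr (Equiv.addRight k))

/-- The action of the top group `ℤ` on the base group `⨁_{i ∈ ℤ} ℤ` by shifting indices. -/
noncomputable def wrφ : Multiplicative ℤ →* MulAut (Multiplicative (ℤ →₀ ℤ)) where
  toFun k := shiftAut k.toAdd
  map_one' := by
    ext f
    simp [shiftAut, Finsupp.domCongr_apply, emd_one]
  map_mul' k l := by
    ext f
    simp [shiftAut, Finsupp.domCongr_apply, MulAut.mul_apply, emd_mul]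
    try simp [Finsupp.equivMapDomain_apply]
    try ring_nf

/-- The restricted wreath product `ℤ ≀ ℤ`, realized as the semidirect product
of the base group `⨁_{i ∈ ℤ} ℤ` by `ℤ` acting by shifts. -/
noncomputable abbrev ZwrZ : Type :=
  SemidirectProduct (Multiplicative (ℤ →₀ ℤ)) (Multiplicative ℤ) wrφ

/-- The standard generator `a` of `ℤ ≀ ℤ` (generator of the 0-th base copy of `ℤ`). -/
noncomputable def aGen : ZwrZ := SemidirectProduct.inl (Multiplicative.ofAdd (Finsupp.single 0 1))

/-- The standard generator `b` of `ℤ ≀ ℤ` (generator of the acting copy of `ℤ`). -/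
noncomputable def bGen : ZwrZ := SemidirectProduct.inr (Multiplicative.ofAdd 1)

/-- The embedding of a base-group element `c = (n_i)_{i ∈ ℤ}` into `ℤ ≀ ℤ`. -/
noncomputable def base (c : ℤ →₀ ℤ) : ZwrZ := SemidirectProduct.inl (Multiplicative.ofAdd c)

open scoped commutatorElement

/-!
An element of the commutator subgroup of `ℤ ≀ ℤ` lies in the base group (its image in the top
`ℤ` vanishes) and its coordinates sum to zero (the coordinate sum is a homomorphism to `ℤ`
killing commutators). Such a finitely supported `c : ℤ →₀ ℤ` telescopes as `c = u - s u` with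
`s` the shift, and `u - s u` is exactly the commutator `⁅u, b⁆` in the wreath product.
-/

open Finsupp SemidirectProduct

namespace Finsupp

variable {M : Type*} [AddCommGroup M]

/-- `(bwdDiff u) i = u i - u (i - 1)` -/
noncomputable def bwdDiff : (ℤ →₀ M) →+ (ℤ →₀ M) :=
  AddMonoidHom.id _ - (Finsupp.domCongr (Equiv.addRight (1 : ℤ))).toAddMonoidHom

theorem bwdDiff_apply (u : ℤ →₀ M) :
    bwdDiff u = u - equivMapDomain (Equiv.addRight 1) u :=
  rfl

theorem single_sub_single_add_one_mem_range_bwdDiff (a : ℤ) (m : M) :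
    single a m - single (a + 1) m ∈ bwdDiff.range :=
  ⟨single a m, by rw [bwdDiff_apply, equivMapDomain_single]; rfl⟩

theorem single_sub_single_zero_mem_range_bwdDiff (a : ℤ) (m : M) :
    single a m - single 0 m ∈ bwdDiff.range := by
  have step : ∀ b : ℤ, single b m - single 0 m ∈ bwdDiff.range ↔
      single (b + 1) m - single 0 m ∈ bwdDiff.range := fun b => by
    rw [← sub_add_sub_cancel (single b m) (single (b + 1) m),
      AddSubgroup.add_mem_cancel_left _ (single_sub_single_add_one_mem_range_bwdDiff b m)]
  induction a using Int.induction_on with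
  | zero => simp
  | succ k ih => exact (step k).1 ih
  | pred k ih => exact (step (-k - 1)).2 (by rwa [sub_add_cancel])

theorem sub_single_degree_mem_range_bwdDiff (f : ℤ →₀ M) :
    f - single 0 f.degree ∈ bwdDiff.range := by
  induction f using induction_linear with
  | zero => simp
  | add f g hf hg =>
    rw [map_add, single_add, add_sub_add_comm]
    exact add_mem hf hg
  | single a m =>
    rw [degree_single]
    exact single_sub_single_zero_mem_range_bwdDiff a m

theorem mem_range_bwdDiff_of_degree_eq_zero {f : ℤ →₀ M} (hf : f.degree = 0) :
    f ∈ bwdDiff.range := by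
  simpa [hf] using sub_single_degree_mem_range_bwdDiff f

end Finsupp

namespace SemidirectProduct

theorem commutatorElement_inl_inr {N G : Type*} [Group N] [Group G] {φ : G →* MulAut N}
    (n : N) (g : G) : ⁅(inl n : N ⋊[φ] G), (inr g : N ⋊[φ] G)⁆ = inl (n * (φ g n)⁻¹) := by
  rw [commutatorElement_def, map_mul, map_inv, inl_aut, map_inv]
  group

theorem right_eq_one_of_mem_commutator {N G : Type*} [Group N] [CommGroup G]
    {φ : G →* MulAut N} {x : N ⋊[φ] G} (hx : x ∈ commutator (N ⋊[φ] G)) : x.right = 1 :=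
  Abelianization.commutator_subset_ker rightHom hx

end SemidirectProduct

theorem wrφ_apply (k : Multiplicative ℤ) (c : Multiplicative (ℤ →₀ ℤ)) :
    wrφ k c = Multiplicative.ofAdd (equivMapDomain (Equiv.addRight k.toAdd) c.toAdd) :=
  rfl

theorem degree_wrφ (k : Multiplicative ℤ) (c : Multiplicative (ℤ →₀ ℤ)) :
    (wrφ k c).toAdd.degree = c.toAdd.degree := by
  simp [wrφ_apply, equivMapDomain_eq_mapDomain]

noncomputable def baseDegree : ZwrZ →* Multiplicative ℤ :=
  lift (AddMonoidHom.toMultiplicative degree) 1 fun k => by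
    ext c
    simp [degree_wrφ]

theorem baseDegree_apply (g : ZwrZ) : baseDegree g = Multiplicative.ofAdd g.left.toAdd.degree :=
  mul_one _

theorem degree_left_eq_zero_of_mem_commutator {g : ZwrZ} (hg : g ∈ commutator ZwrZ) :
    g.left.toAdd.degree = 0 := by
  have := Abelianization.commutator_subset_ker baseDegree hg
  rwa [MonoidHom.mem_ker, baseDegree_apply, ofAdd_eq_one] at this

theorem commutatorElement_base_bGen (u : ℤ →₀ ℤ) :
    ⁅base u, bGen⁆ = base (bwdDiff u) := by
  simp only [base, bGen, bwdDiff_apply, commutatorElement_inl_inr, wrφ_apply, toAdd_ofAdd,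
    ← ofAdd_neg, ← ofAdd_add, sub_eq_add_neg]

/-- The commutator width of `ℤ ≀ ℤ` is `1`: every element of the commutator subgroup
is a commutator. -/
theorem commutatorWidth_ZwrZ :
    ∀ g ∈ commutator ZwrZ, ∃ x y : ZwrZ, g = ⁅x, y⁆ := by
  intro g hg
  obtain ⟨u, hu⟩ :=
    mem_range_bwdDiff_of_degree_eq_zero (degree_left_eq_zero_of_mem_commutator hg)
  refine ⟨base u, bGen, ?_⟩
  rw [commutatorElement_base_bGen, hu]
  calc g = inl g.left * inr g.right := (inl_left_mul_inr_right g).symm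
    _ = base g.left.toAdd := by rw [right_eq_one_of_mem_commutator hg, map_one, mul_one]; rfl
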